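/- If k and n are both odd and k < n, then the number D_k(n) of k-derangements in S_n is even. -/

import Mathlib

def IsKDerangement (n k : ℕ) (σ : Equiv.Perm (Fin n)) : Prop :=
  ∀ X : Finset (Fin n), X.card = k → X.image σ ≠ X

lemma IsKDerangement.inv {n k : ℕ} {σ : Equiv.Perm (Fin n)}
    (h : IsKDerangement n k σ) : IsKDerangement n k σ⁻¹ := by
  intro X hX hfix
  refine h X hX ?_
  nth_rewrite 1 [← hfix]
  rw [Finset.image_image]
  simp [Function.comp_def]

def derangementGraph (n k : ℕ) : SimpleGraph (Equiv.Perm (Fin n)) where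
  Adj σ τ := σ ≠ τ ∧ IsKDerangement n k (σ * τ⁻¹)
  symm := by
    constructor
    rintro σ τ ⟨hne, h⟩
    exact ⟨hne.symm, by simpa [mul_inv_rev] using h.inv⟩
  loopless := by constructor; rintro σ ⟨hne, -⟩; exact hne rfl

noncomputable def numKDerangements (n k : ℕ) : ℕ :=
  Nat.card {σ : Equiv.Perm (Fin n) // IsKDerangement n k σ}

noncomputable def indepNum {V : Type*} (G : SimpleGraph V) : ℕ :=
  sSup {m | ∃ s : Finset V, (∀ a ∈ s, ∀ b ∈ s, a ≠ b → ¬ G.Adj a b) ∧ s.card = m}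

/-!
Inversion `σ ↦ σ⁻¹` is an involution on the `k`-derangements, so it suffices that it has no
fixed point, i.e. that no involution `σ` of `Fin n` is a `k`-derangement. The orbits of an
involution have size one or two, so a `σ`-invariant set of any even size `n - k ≤ n` can be
assembled orbit by orbit (taking two fixed points at a time once the 2-cycles run out); its
complement is a `σ`-invariant set of size `k`.
-/

open Finset Function

theorem Function.Involutive.even_natCard {α : Type*} [Finite α] {f : α → α} (hf : Involutive f)
    (hne : ∀ x, f x ≠ x) : Even (Nat.card α) := by
  have := Fintype.ofFinite α
  rw [Nat.card_eq_fintype_card, even_iff_two_dvd]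
  by_contra h2
  obtain ⟨x, hx⟩ := Equiv.Perm.exists_fixed_point_of_prime (n := 1) h2 (σ := hf.toPerm f)
    (by ext x; simp [sq, hf x])
  exact hne x hx

namespace Finset

variable {α : Type*} [DecidableEq α] {f : α → α} {s : Finset α}

theorem exists_subset_card_eq_two_image_eq (hf : Involutive f) (hs : s.image f = s)
    (h2 : 2 ≤ #s) : ∃ t ⊆ s, #t = 2 ∧ t.image f = t := by
  by_cases hmoved : ∃ x ∈ s, f x ≠ x
  · obtain ⟨x, hxs, hx⟩ := hmoved
    refine ⟨{x, f x}, ?_, card_pair hx.symm, ?_⟩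
    · simpa [insert_subset_iff, hxs] using hs ▸ mem_image_of_mem f hxs
    · rw [image_insert, image_singleton, hf x, pair_comm]
  · push Not at hmoved
    obtain ⟨t, hts, ht⟩ := exists_subset_card_eq h2
    exact ⟨t, hts, ht, by rw [image_congr fun x hx => hmoved x (hts hx), image_id']⟩

theorem exists_subset_card_eq_image_eq_of_even (hf : Involutive f) (hs : s.image f = s)
    {m : ℕ} (hm : Even m) (hms : m ≤ #s) : ∃ t ⊆ s, #t = m ∧ t.image f = t := by
  obtain ⟨j, rfl⟩ := hm
  induction j with
  | zero => exact ⟨∅, empty_subset s, rfl, image_empty f⟩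
  | succ j ih =>
    obtain ⟨t, hts, ht, htf⟩ := ih (by omega)
    have hrest : (s \ t).image f = s \ t := by rw [image_sdiff _ _ hf.injective, hs, htf]
    obtain ⟨p, hp, hp2, hpf⟩ := exists_subset_card_eq_two_image_eq hf hrest
      (by rw [card_sdiff_of_subset hts]; omega)
    refine ⟨t ∪ p, union_subset hts (hp.trans sdiff_subset), ?_, by rw [image_union, htf, hpf]⟩
    rw [card_union_of_disjoint (disjoint_of_subset_right hp disjoint_sdiff), ht, hp2]
    omega

end Finset

theorem Function.Involutive.exists_card_eq_image_eq {α : Type*} [Fintype α] [DecidableEq α]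
    {f : α → α} (hf : Involutive f) {k : ℕ} (hk : k ≤ Fintype.card α)
    (hpar : Even (Fintype.card α - k)) : ∃ X : Finset α, #X = k ∧ X.image f = X := by
  obtain ⟨t, -, ht, htf⟩ := exists_subset_card_eq_image_eq_of_even hf
    (image_univ_of_surjective hf.surjective) hpar (by simp)
  refine ⟨tᶜ, by rw [card_compl, ht]; omega, ?_⟩
  rw [compl_eq_univ_sdiff, image_sdiff _ _ hf.injective, htf,
    image_univ_of_surjective hf.surjective]

theorem not_isKDerangement_of_involutive {n k : ℕ} (hk : Odd k) (hn : Odd n) (hkn : k ≤ n)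
    {σ : Equiv.Perm (Fin n)} (hσ : Involutive σ) : ¬ IsKDerangement n k σ := by
  obtain ⟨X, hX, hXσ⟩ := hσ.exists_card_eq_image_eq (k := k) (by simpa using hkn)
    (by simpa using Nat.Odd.sub_odd hn hk)
  exact fun h => h X hX hXσ

/-- If `k` and `n` are both odd and `k < n`, then the number of `k`-derangements
in `S_n` is even. -/
theorem even_numKDerangements_of_odd_odd (n k : ℕ) (hk : Odd k) (hn : Odd n) (hkn : k < n) :
    Even (numKDerangements n k) := by
  refine Involutive.even_natCard (f := fun σ => ⟨σ.1⁻¹, σ.2.inv⟩) (fun σ => by simp) ?_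
  rintro ⟨σ, hσ⟩ hinv
  have hσσ : σ⁻¹ = σ := congrArg Subtype.val hinv
  exact not_isKDerangement_of_involutive hk hn hkn.le
    (fun x => (Equiv.Perm.inv_eq_iff_eq.mp (DFunLike.congr_fun hσσ x)).symm) hσ
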